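/- Let S be the set of functions ℕ → ℕ that arise as evaluations of one-variable terms built from the variable x using only the operations + and exp2 (base-2 exponentiation), and let ≺ be the eventual strict dominance relation on S. Then (S, ≺) is a well-order whose order type is exactly ε₀, the least ordinal ε satisfying ω^ε = ε. -/

import Mathlib

/-- One-variable terms in the signature {+, exp2}. -/
inductive XTerm : Type
  | x : XTerm
  | add : XTerm → XTerm → XTerm
  | exp2 : XTerm → XTerm

/-- Evaluation over ℕ: + is addition and exp2(x) = 2^x. -/
def XTerm.eval : XTerm → ℕ → ℕ
  | .x, n => n
  | .add s t, n => s.eval n + t.eval n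
  | .exp2 s, n => 2 ^ (s.eval n)

/-- The set S of functions ℕ → ℕ arising as evaluations of {+,exp2}-terms. -/
def S11 : Type := {f : ℕ → ℕ // ∃ t : XTerm, ∀ n, t.eval n = f n}

/-- Eventual strict dominance: s ≺ t iff s(x) < t(x) for all sufficiently large x. -/
def EvDom (s t : ℕ → ℕ) : Prop := ∃ x₀ : ℕ, ∀ x > x₀, s x < t x

/-- The eventual dominance relation on S. -/
def r11 (a b : S11) : Prop := EvDom a.1 b.1

/-- ε₀: the least ordinal ε with ω^ε = ε. -/
noncomputable def eps0 : Ordinal := sInf {o : Ordinal | Ordinal.omega0 ^ o = o}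

/-!
Send a term to a Cantor normal form below `ε₀`: `x ↦ ω ^ 0`, `exp2 s ↦ ω ^ s`, and `+` to the
natural (Hessenberg) sum, which on normal forms is merging. Reading a normal form back as a
function, with `ω ^ 0` as `x` and `ω ^ e` as `2 ^ e`, recovers the evaluation of the term. A
smaller normal form is eventually dominated by a larger one, by a simultaneous induction with the
statement that a normal form below `ω ^ b` is eventually dominated by `2 ^ b`. So eventual
domination of terms is the order of their normal forms. Every nonzero ordinal below `ε₀` has a
normal form, and every nonzero normal form comes from a term, so `S` is ordered like the nonzero
ordinals below `ε₀`, whose order type is `ε₀`.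
-/

open Ordinal Filter Set

theorem Nat.eventually_mul_le_two_pow (c : ℕ) : ∀ᶠ x in atTop, c * x ≤ 2 ^ x := by
  have h := (isLittleO_coe_const_pow_of_one_lt (R := ℝ) one_lt_two).bound
    (c := 1 / (c + 1)) (by positivity)
  filter_upwards [h] with x hx
  simp only [Real.norm_natCast, norm_pow, Real.norm_ofNat] at hx
  have : (c : ℝ) * x ≤ 2 ^ x := by
    rw [div_mul_eq_mul_div, one_mul, le_div_iff₀ (by positivity)] at hx
    nlinarith [(by positivity : (0:ℝ) ≤ x)]
  exact_mod_cast this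

namespace Ordinal

theorem log_omega0_lt_self {o : Ordinal} (h0 : o ≠ 0) (h : o < ε₀) : log ω o < o := by
  refine (log_le_self ω o).lt_of_ne fun heq => h.not_ge (epsilon_zero_le_of_omega0_opow_le ?_)
  calc ω ^ o = ω ^ log ω o := by rw [heq]
    _ ≤ o := opow_log_le_self ω h0

theorem isPrincipal_add_epsilon_zero : IsPrincipal (· + ·) ε₀ := by
  simpa only [omega0_opow_epsilon] using isPrincipal_add_omega0_opow ε₀

theorem exists_isWellOrder_type_eq {α : Type u} {r : α → α → Prop} {o : Ordinal.{u}}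
    (f : α → Ordinal.{u}) (hf : ∀ a b, r a b ↔ f a < f b) (hinj : Function.Injective f)
    (hrange : range f = Iio o) : ∃ _ : IsWellOrder α r, type r = o := by
  have hmem : ∀ a, f a ∈ Iio o := fun a => hrange ▸ mem_range_self a
  let e : r ≃r (· < · : Iio o → Iio o → Prop) :=
    ⟨Equiv.ofBijective (fun a => ⟨f a, hmem a⟩)
      ⟨fun a b hab => hinj (congrArg Subtype.val hab), fun ⟨p, hp⟩ => by
        obtain ⟨a, rfl⟩ := hrange.symm ▸ hp; exact ⟨a, rfl⟩⟩,
      fun {a b} => (hf a b).symm⟩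
  let e' : r ≃r (· < · : o.ToType → o.ToType → Prop) := e.trans ToType.mk.toRelIsoLT
  have := e'.toRelEmbedding.isWellOrder
  exact ⟨this, e'.ordinalType_congr.trans (type_toType o)⟩

end Ordinal

theorem eps0_eq_epsilon_zero : eps0 = ε₀ := by
  unfold eps0
  exact le_antisymm (csInf_le' (omega0_opow_epsilon 0))
    (le_csInf ⟨_, omega0_opow_epsilon 0⟩ fun _ ho => epsilon_zero_le_of_omega0_opow_le ho.le)

namespace ONote

theorem repr_lt_epsilon_zero : ∀ a : ONote, repr a < ε₀
  | zero => epsilon_pos 0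
  | oadd e n a =>
    isPrincipal_add_epsilon_zero
      ((opow_mul_lt_opow (natCast_lt_omega0 n) (repr_lt_epsilon_zero e)).trans_eq
        (omega0_opow_epsilon 0))
      (repr_lt_epsilon_zero a)

theorem exists_nf_repr_eq {o : Ordinal} (ho : o < ε₀) : ∃ a, NF a ∧ repr a = o := by
  induction o using WellFoundedLT.induction with
  | _ o IH =>
  rcases eq_or_ne o 0 with rfl | h0
  · exact ⟨0, NF.zero, rfl⟩
  have hlog := log_omega0_lt_self h0 ho
  have hpow : ω ^ log ω o ≠ 0 := (opow_pos _ omega0_pos).ne'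
  have hmod : o % ω ^ log ω o < o := (mod_lt o hpow).trans_le (opow_log_le_self ω h0)
  obtain ⟨e, he, hre⟩ := IH _ hlog (hlog.trans ho)
  obtain ⟨a, ha, hra⟩ := IH _ hmod (hmod.trans ho)
  obtain ⟨n, hn⟩ := lt_omega0.1 (div_opow_log_lt o one_lt_omega0)
  have hn0 : 0 < n := by
    have := (div_pos hpow).2 (opow_log_le_self ω h0)
    rw [hn] at this
    exact_mod_cast this
  refine ⟨oadd e ⟨n, hn0⟩ a, NF.oadd he _ (NF.below_of_lt' ?_ ha), ?_⟩
  · rw [hra, hre]; exact mod_lt o hpow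
  · simp only [repr, PNat.mk_coe]
    rw [hre, hra, ← hn, div_add_mod]

-- Mathlib does not generate the `sizeOf` equations for `ONote`.
theorem sizeOf_oadd (e : ONote) (n : ℕ+) (a : ONote) :
    sizeOf (oadd e n a) = 1 + sizeOf e + sizeOf n + sizeOf a := rfl

def nadd : ONote → ONote → ONote
  | zero, b => b
  | oadd e n a, zero => oadd e n a
  | oadd e₁ n₁ a₁, oadd e₂ n₂ a₂ =>
    match cmp e₁ e₂ with
    | .lt => oadd e₂ n₂ (nadd (oadd e₁ n₁ a₁) a₂)
    | .eq => oadd e₁ (n₁ + n₂) (nadd a₁ a₂)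
    | .gt => oadd e₁ n₁ (nadd a₁ (oadd e₂ n₂ a₂))
  termination_by a b => sizeOf a + sizeOf b
  decreasing_by all_goals simp only [sizeOf_oadd]; omega

def eval : ONote → ℕ → ℕ
  | zero, _ => 0
  | oadd e n a, x => n * (if e = 0 then x else 2 ^ eval e x) + eval a x

@[simp]
theorem zero_nadd (b : ONote) : nadd 0 b = b :=
  nadd.eq_1 b

@[simp]
theorem nadd_zero (a : ONote) : nadd a 0 = a := by
  cases a
  exacts [nadd.eq_1 0, nadd.eq_2 _ _ _]

theorem eval_oadd (e : ONote) (n : ℕ+) (a : ONote) (x : ℕ) :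
    (oadd e n a).eval x = n * (if e = 0 then x else 2 ^ e.eval x) + a.eval x := rfl

theorem eval_nadd (a b : ONote) (x : ℕ) : (nadd a b).eval x = a.eval x + b.eval x := by
  induction a, b using nadd.induct with
  | case1 b => simp [eval]
  | case2 e n a => simp [eval]
  | case3 e₁ n₁ a₁ e₂ n₂ a₂ h ih => rw [nadd, h]; simp only [eval_oadd, ih]; ring
  | case4 e₁ n₁ a₁ e₂ n₂ a₂ h ih =>
    obtain rfl := eq_of_cmp_eq h
    rw [nadd, h]; simp only [eval_oadd, ih, PNat.add_coe]; ring
  | case5 e₁ n₁ a₁ e₂ n₂ a₂ h ih => rw [nadd, h]; simp only [eval_oadd, ih]; ring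

theorem cmp_eq_gt {a b : ONote} [NF a] [NF b] (h : b < a) : cmp a b = .gt :=
  (cmp_compares a b).inj h

theorem cmp_self (a : ONote) [NF a] : cmp a a = .eq :=
  (cmp_compares a a).inj rfl

theorem nadd_nfBelow {b : Ordinal} {a₁ a₂ : ONote} (h₁ : NFBelow a₁ b) (h₂ : NFBelow a₂ b) :
    NFBelow (nadd a₁ a₂) b := by
  induction a₁, a₂ using nadd.induct generalizing b with
  | case1 => rwa [nadd]
  | case2 => rwa [nadd]
  | case3 e₁ n₁ a₁ e₂ n₂ a₂ h ih =>
    have := h₁.fst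
    have := h₂.fst
    rw [nadd, h]
    have hlt : repr e₁ < repr e₂ := (cmp_compares e₁ e₂).eq_lt.1 h
    exact NFBelow.oadd h₂.fst (ih (NFBelow.oadd h₁.fst h₁.snd hlt) h₂.snd) h₂.lt
  | case4 e₁ n₁ a₁ e₂ n₂ a₂ h ih =>
    obtain rfl := eq_of_cmp_eq h
    rw [nadd, h]
    exact NFBelow.oadd h₁.fst (ih h₁.snd h₂.snd) h₁.lt
  | case5 e₁ n₁ a₁ e₂ n₂ a₂ h ih =>
    have := h₁.fst
    have := h₂.fst
    rw [nadd, h]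
    have hlt : repr e₂ < repr e₁ := (cmp_compares e₁ e₂).eq_gt.1 h
    exact NFBelow.oadd h₁.fst (ih h₁.snd (NFBelow.oadd h₂.fst h₂.snd hlt)) h₁.lt

instance nadd_nf (a₁ a₂ : ONote) [h₁ : NF a₁] [h₂ : NF a₂] : NF (nadd a₁ a₂) := by
  obtain ⟨b₁, h₁⟩ := h₁
  obtain ⟨b₂, h₂⟩ := h₂
  exact ⟨_, nadd_nfBelow (h₁.mono (le_max_left b₁ b₂)) (h₂.mono (le_max_right b₁ b₂))⟩

theorem nadd_ne_zero {a : ONote} (b : ONote) (ha : a ≠ 0) : nadd a b ≠ 0 := by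
  cases a with
  | zero => exact absurd rfl ha
  | oadd e₁ n₁ a₁ =>
    cases b with
    | zero => rwa [nadd]
    | oadd e₂ n₂ a₂ => rw [nadd]; split <;> nofun

theorem oadd_nadd_of_nfBelow {e a : ONote} [NF e] (n : ℕ+) (ha : NFBelow a (repr e)) :
    nadd (oadd e n 0) a = oadd e n a := by
  cases a with
  | zero => exact nadd_zero _
  | oadd e' n' a' =>
    have := ha.fst
    rw [nadd, cmp_eq_gt ha.lt]
    dsimp only
    rw [zero_nadd]

theorem oadd_nadd_oadd_self (e : ONote) [NF e] (n₁ n₂ : ℕ+) (a : ONote) :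
    nadd (oadd e n₁ 0) (oadd e n₂ a) = oadd e (n₁ + n₂) a := by
  rw [nadd, cmp_self]
  dsimp only
  rw [zero_nadd]

theorem self_le_eval {a : ONote} (ha : a ≠ 0) (x : ℕ) : x ≤ a.eval x := by
  induction a with
  | zero => exact absurd rfl ha
  | oadd e n a ihe _ =>
    have hatom : x ≤ if e = 0 then x else 2 ^ e.eval x := by
      split_ifs with he
      · exact le_rfl
      · exact (ihe he).trans Nat.lt_two_pow_self.le
    rw [eval_oadd]
    exact (hatom.trans (Nat.le_mul_of_pos_left _ n.pos)).trans (Nat.le_add_right _ _)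

/- The slack `+ x` is what makes the induction go through: `e + x ≤ B` eventually gives
`2 ^ x * 2 ^ e ≤ 2 ^ B`, which pays for the coefficient `n` of a leading term `ω ^ e * n`. -/
mutual

theorem eventually_add_le_eval {A B : ONote} (hA : NF A) (hB : NF B) (h : repr A < repr B) :
    ∀ᶠ x in atTop, A.eval x + x ≤ B.eval x := by
  match A, B with
  | zero, B =>
    have hB0 : B ≠ 0 := by rintro rfl; exact h.false
    exact .of_forall fun x => by simpa [eval] using self_le_eval hB0 x
  | oadd _ _ _, zero => exact absurd h (not_lt_of_ge zero_le)
  | oadd e₁ n₁ a₁, oadd e₂ n₂ a₂ =>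
    have := hA.fst
    have := hB.fst
    rcases lt_trichotomy (repr e₁) (repr e₂) with he | he | he
    · have he₂ : e₂ ≠ 0 := by rintro rfl; exact (zero_le).not_gt he
      filter_upwards [eventually_add_le_two_pow_eval hB.fst he₂ (NFBelow.oadd hA.fst hA.snd' he)]
        with x hx
      rw [eval_oadd e₂, if_neg he₂]
      exact hx.trans ((Nat.le_mul_of_pos_left _ n₂.pos).trans (Nat.le_add_right _ _))
    · obtain rfl := repr_inj.1 he
      rcases lt_trichotomy (n₁ : ℕ) n₂ with hn | hn | hn
      · have htail : ∀ᶠ x in atTop, a₁.eval x + x ≤ if e₁ = 0 then x else 2 ^ e₁.eval x := by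
          by_cases he₁ : e₁ = 0
          · simp [he₁, hA.zero_of_zero he₁, eval]
          · simpa only [if_neg he₁] using eventually_add_le_two_pow_eval hA.fst he₁ hA.snd'
        filter_upwards [htail] with x hx
        simp only [eval_oadd]
        nlinarith
      · obtain rfl := PNat.coe_injective hn
        have ha : repr a₁ < repr a₂ := by simpa [repr] using h
        filter_upwards [eventually_add_le_eval hA.snd hB.snd ha] with x hx
        simp only [eval_oadd]
        omega
      · exact absurd h (lt_asymm (oadd_lt_oadd_2 hB hn))
    · exact absurd h (lt_asymm (oadd_lt_oadd_1 hB he))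
termination_by sizeOf A + sizeOf B
decreasing_by all_goals simp only [sizeOf_oadd]; omega

theorem eventually_add_le_two_pow_eval {A B : ONote} (hB : NF B) (hB0 : B ≠ 0)
    (h : NFBelow A (repr B)) : ∀ᶠ x in atTop, A.eval x + x ≤ 2 ^ B.eval x := by
  match A with
  | zero =>
    exact .of_forall fun x => by
      simpa [eval] using Nat.lt_two_pow_self.le.trans
        (Nat.pow_le_pow_right two_pos (self_le_eval hB0 x))
  | oadd e n a =>
    by_cases he : e = 0
    · obtain rfl : a = 0 := NF.zero_of_zero ⟨_, h⟩ he
      filter_upwards [Nat.eventually_mul_le_two_pow (n + 1)] with x hx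
      simp only [if_pos he, eval]
      calc n * x + 0 + x = (n + 1) * x := by ring
        _ ≤ 2 ^ x := hx
        _ ≤ 2 ^ B.eval x := Nat.pow_le_pow_right two_pos (self_le_eval hB0 x)
    · filter_upwards [eventually_add_le_eval h.fst hB h.lt,
        eventually_add_le_two_pow_eval h.fst he h.snd, eventually_ge_atTop (n + 1 : ℕ)]
        with x hexp htail hx
      rw [eval_oadd, if_neg he]
      calc n * 2 ^ e.eval x + a.eval x + x ≤ (n + 1) * 2 ^ e.eval x := by linarith
        _ ≤ 2 ^ x * 2 ^ e.eval x := Nat.mul_le_mul_right _ (hx.trans Nat.lt_two_pow_self.le)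
        _ = 2 ^ (x + e.eval x) := (pow_add 2 x _).symm
        _ ≤ 2 ^ B.eval x := Nat.pow_le_pow_right two_pos (by omega)
termination_by sizeOf A + sizeOf B
decreasing_by all_goals simp only [sizeOf_oadd]; omega

end

end ONote

theorem evDom_iff_eventually {f g : ℕ → ℕ} : EvDom f g ↔ ∀ᶠ n in atTop, f n < g n := by
  rw [eventually_atTop]
  constructor
  · rintro ⟨x₀, h⟩
    exact ⟨x₀ + 1, fun x hx => h x hx⟩
  · rintro ⟨x₀, h⟩
    exact ⟨x₀, fun x hx => h x hx.le⟩

namespace XTerm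

open ONote

def toONote : XTerm → ONote
  | x => 1
  | add s t => nadd s.toONote t.toONote
  | exp2 s => oadd s.toONote 1 0

theorem toONote_ne_zero : ∀ t : XTerm, t.toONote ≠ 0
  | x => nofun
  | add s _ => nadd_ne_zero _ s.toONote_ne_zero
  | exp2 _ => nofun

instance nf_toONote : ∀ t : XTerm, NF t.toONote
  | x => nf_one
  | add s t => @nadd_nf _ _ s.nf_toONote t.nf_toONote
  | exp2 s => @NF.oadd_zero _ _ s.nf_toONote

theorem eval_toONote (t : XTerm) (n : ℕ) : t.toONote.eval n = t.eval n := by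
  induction t with
  | x => simp [toONote, ONote.eval, XTerm.eval]
  | add s t ihs iht => simp [toONote, eval_nadd, ihs, iht, XTerm.eval]
  | exp2 s ihs => simp [toONote, eval_oadd, s.toONote_ne_zero, ihs, ONote.eval, XTerm.eval]

theorem exists_toONote_eq {a : ONote} (hnf : NF a) (ha : a ≠ 0) : ∃ t : XTerm, t.toONote = a := by
  induction a with
  | zero => exact absurd rfl ha
  | oadd e n a ihe iha =>
    obtain ⟨u, hu⟩ : ∃ u : XTerm, u.toONote = oadd e 1 0 := by
      by_cases he : e = 0
      · exact ⟨x, by rw [he]; rfl⟩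
      · obtain ⟨s, hs⟩ := ihe hnf.fst he
        exact ⟨exp2 s, by rw [toONote, hs]⟩
    have he := hnf.fst
    have hbelow := hnf.snd'
    clear ha hnf
    induction n using PNat.recOn with
    | one =>
      by_cases ha0 : a = 0
      · exact ⟨u, by rw [hu, ha0]⟩
      · obtain ⟨s, hs⟩ := iha ⟨⟨_, hbelow⟩⟩ ha0
        exact ⟨add u s, by rw [toONote, hu, hs, oadd_nadd_of_nfBelow 1 hbelow]⟩
    | succ n ih =>
      obtain ⟨s, hs⟩ := ih
      exact ⟨add u s, by rw [toONote, hu, hs, oadd_nadd_oadd_self, add_comm]⟩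

theorem one_le_repr_toONote (t : XTerm) : 1 ≤ t.toONote.repr :=
  Order.one_le_iff_pos.2 <| pos_iff_ne_zero.2 fun h => t.toONote_ne_zero (repr_inj.1 h)

theorem eventually_eval_lt {s t : XTerm} (h : s.toONote.repr < t.toONote.repr) :
    ∀ᶠ n in atTop, s.eval n < t.eval n := by
  filter_upwards [eventually_add_le_eval s.nf_toONote t.nf_toONote h, eventually_gt_atTop 0]
    with n hle hpos
  rw [← eval_toONote, ← eval_toONote]
  omega

theorem toONote_eq_iff {s t : XTerm} : s.toONote = t.toONote ↔ s.eval = t.eval := by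
  refine ⟨fun h => funext fun n => by rw [← eval_toONote, h, eval_toONote], fun h => ?_⟩
  refine repr_inj.1 (le_antisymm (not_lt.1 fun hlt => ?_) (not_lt.1 fun hlt => ?_))
  · obtain ⟨n, hn⟩ := (eventually_eval_lt hlt).exists
    exact hn.ne (congrFun h n).symm
  · obtain ⟨n, hn⟩ := (eventually_eval_lt hlt).exists
    exact hn.ne (congrFun h n)

theorem repr_toONote_lt_iff {s t : XTerm} :
    s.toONote.repr < t.toONote.repr ↔ ∀ᶠ n in atTop, s.eval n < t.eval n := by
  refine ⟨eventually_eval_lt, fun h => lt_of_not_ge fun hle => ?_⟩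
  rcases hle.lt_or_eq with hlt | heq
  · obtain ⟨n, hts, hst⟩ := ((eventually_eval_lt hlt).and h).exists
    exact lt_asymm hts hst
  · obtain ⟨n, hn⟩ := h.exists
    exact hn.ne (congrFun (toONote_eq_iff.1 (repr_inj.1 heq)) n).symm

theorem exists_repr_toONote_eq {o : Ordinal} (h0 : 0 < o) (h : o < ε₀) :
    ∃ t : XTerm, t.toONote.repr = o := by
  obtain ⟨a, ha, rfl⟩ := exists_nf_repr_eq h
  obtain ⟨t, rfl⟩ := exists_toONote_eq ha (by rintro rfl; exact h0.ne rfl)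
  exact ⟨t, rfl⟩

end XTerm

namespace S11

noncomputable def term (f : S11) : XTerm := f.2.choose

theorem eval_term (f : S11) : f.term.eval = f.1 := funext f.2.choose_spec

-- Terms take exactly the nonzero ordinal values below `ε₀`; subtracting one starts ranks at `0`.
noncomputable def rank (f : S11) : Ordinal := f.term.toONote.repr - 1

theorem one_add_rank (f : S11) : 1 + f.rank = f.term.toONote.repr :=
  Ordinal.add_sub_cancel_of_le f.term.one_le_repr_toONote

theorem r11_iff_rank_lt {f g : S11} : r11 f g ↔ f.rank < g.rank := by
  rw [← add_lt_add_iff_left 1, one_add_rank, one_add_rank, XTerm.repr_toONote_lt_iff,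
    eval_term, eval_term, r11, evDom_iff_eventually]

theorem rank_injective : Function.Injective rank := fun f g h => by
  have hrepr : f.term.toONote = g.term.toONote :=
    ONote.repr_inj.1 (by rw [← one_add_rank, ← one_add_rank, h])
  exact Subtype.ext (by rw [← eval_term, ← eval_term, XTerm.toONote_eq_iff.1 hrepr])

theorem range_rank : range rank = Iio ε₀ := by
  ext o
  refine ⟨?_, fun ho => ?_⟩
  · rintro ⟨f, rfl⟩
    exact (Ordinal.sub_le_self _ _).trans_lt (ONote.repr_lt_epsilon_zero _)
  · have h1 : (1 : Ordinal) < ε₀ := one_lt_omega0.trans (omega0_lt_epsilon 0)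
    obtain ⟨t, ht⟩ := XTerm.exists_repr_toONote_eq (lt_of_lt_of_le zero_lt_one le_self_add)
      (isPrincipal_add_epsilon_zero h1 ho)
    let f : S11 := ⟨t.eval, t, fun _ => rfl⟩
    refine ⟨f, (add_right_inj 1).1 ?_⟩
    rw [one_add_rank, ← ht, XTerm.toONote_eq_iff.2 (eval_term f)]

end S11

/-- (S, ≺) is a well-order of order type exactly ε₀. -/
theorem stmt11 : ∃ h : IsWellOrder S11 r11, @Ordinal.type S11 r11 h = eps0 := by
  rw [eps0_eq_epsilon_zero]
  exact exists_isWellOrder_type_eq S11.rank (fun _ _ => S11.r11_iff_rank_lt) S11.rank_injective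
    S11.range_rank
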